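/- Let 0 < H < 1 and let X : [0,1] → ℝ be a Lipschitz function with Lipschitz constant M. For an integer N ≥ 1, set δ = 1/N and let Δ_δX ∈ ℝᴺ be the vector of increments (Δ_δX)_i = X((i+1)δ) − X(iδ), i = 0,…,N−1. Then there is a constant C > 0 depending only on H such that the maximum-likelihood-type statistic σ̂²_N := (1/N) · (Δ_δX)ᵀ (P^(N))^{-1} (Δ_δX) satisfies 0 ≤ σ̂²_N ≤ C · M² · δ^{2 − max{1,2H}}; in particular σ̂²_N → 0 as N → ∞. -/

import Mathlib

open Matrix MeasureTheory Filter

/-- The covariance matrix of fractional Gaussian noise with Hurst parameter `H`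
on the equispaced grid of mesh `δ = 1/N` on `[0,1]`. -/
noncomputable def fgnCov (H : ℝ) (N : ℕ) : Matrix (Fin N) (Fin N) ℝ :=
  fun i j =>
    ((1 / (N : ℝ)) ^ (2 * H) / 2) *
      ((|(i : ℝ) - (j : ℝ)| + 1) ^ (2 * H) + abs (|(i : ℝ) - (j : ℝ)| - 1) ^ (2 * H)
        - 2 * |(i : ℝ) - (j : ℝ)| ^ (2 * H))

/-- The vector of increments of size `δ = 1/N` of a function `X` over `[0,1]`:
`(Δ_δ X)_i = X((i+1)δ) − X(iδ)`. -/
noncomputable def increments (X : ℝ → ℝ) (N : ℕ) : Fin N → ℝ :=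
  fun i => X (((i : ℝ) + 1) * (1 / N)) - X ((i : ℝ) * (1 / N))

/-- The maximum-likelihood-type statistic
`σ̂²_N = (1/N) (Δ_δ X)ᵀ (P^(N))⁻¹ (Δ_δ X)`. -/
noncomputable def mleStat (H : ℝ) (X : ℝ → ℝ) (N : ℕ) : ℝ :=
  (1 / (N : ℝ)) * (increments X N ⬝ᵥ (fgnCov H N)⁻¹ *ᵥ increments X N)

section Auxiliary

open Set Real

lemma one_sub_cos_nonneg (t : ℝ) : 0 ≤ 1 - Real.cos t := by
  have := Real.cos_le_one t; linarith

lemma one_sub_cos_le_two (t : ℝ) : 1 - Real.cos t ≤ 2 := by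
  have := Real.neg_one_le_cos t; linarith

lemma one_sub_cos_eq (t : ℝ) : 1 - Real.cos t = 2 * Real.sin (t/2) ^ 2 := by
  have h := Real.cos_sq (t/2)
  have : 2 * (t/2) = t := by ring
  rw [this] at h; nlinarith [Real.sin_sq_add_cos_sq (t/2)]

lemma one_sub_cos_le_sq (t : ℝ) : 1 - Real.cos t ≤ t^2 / 2 := by
  rw [one_sub_cos_eq]
  have h := Real.abs_sin_le_abs (x := t/2)
  have : Real.sin (t/2)^2 ≤ (t/2)^2 := by
    rw [← sq_abs, ← sq_abs (t/2)]; exact pow_le_pow_left₀ (abs_nonneg _) h 2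
  nlinarith

lemma one_sub_cos_lower {s : ℝ} (h0 : 0 ≤ s) (h1 : s ≤ π) :
    2 / π^2 * s^2 ≤ 1 - Real.cos s := by
  rw [one_sub_cos_eq]
  have hs : 2/π * (s/2) ≤ Real.sin (s/2) := Real.mul_le_sin (by linarith) (by linarith)
  have hpos : 0 ≤ 2/π * (s/2) := by positivity
  have h2 : (2/π * (s/2))^2 ≤ Real.sin (s/2)^2 := by nlinarith [mul_self_le_mul_self hpos hs]
  have he : (2/π * (s/2))^2 = s^2/π^2 := by
    have hπ : (π:ℝ) ≠ 0 := Real.pi_ne_zero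
    field_simp
  rw [he] at h2
  have : 2 / π^2 * s^2 = 2 * (s^2/π^2) := by ring
  linarith

lemma measurable_w (a p : ℝ) :
    Measurable (fun s : ℝ => (1 - Real.cos (a*s)) * s ^ p) := by fun_prop

lemma intW {H : ℝ} (hH0 : 0 < H) (hH1 : H < 1) (a : ℝ) :
    IntegrableOn (fun s => (1 - Real.cos (a*s)) * s ^ (-1-2*H)) (Ioi (0:ℝ)) := by
  have hmeas : AEStronglyMeasurable (fun s : ℝ => (1 - Real.cos (a*s)) * s ^ (-1-2*H))
      (volume.restrict (Ioi (0:ℝ))) := (measurable_w a (-1-2*H)).aestronglyMeasurable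
  have hsplit : Ioc (0:ℝ) 1 ∪ Ioi 1 = Ioi 0 := Set.Ioc_union_Ioi_eq_Ioi zero_le_one
  rw [← hsplit]
  apply IntegrableOn.union
  · -- on Ioc 0 1, dominate by (a^2/2) * s^(1-2H)
    have hg : IntegrableOn (fun s : ℝ => a^2/2 * s ^ (1-2*H)) (Ioc (0:ℝ) 1) := by
      have h1 : IntervalIntegrable (fun s : ℝ => s ^ (1-2*H)) volume 0 1 :=
        intervalIntegral.intervalIntegrable_rpow' (by linarith)
      exact ((intervalIntegrable_iff_integrableOn_Ioc_of_le zero_le_one).mp h1).const_mul _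
    refine Integrable.mono hg ((measurable_w a (-1-2*H)).aestronglyMeasurable) ?_
    filter_upwards [ae_restrict_mem measurableSet_Ioc] with s hs
    have hs0 : 0 < s := hs.1
    have hrp : (0:ℝ) < s ^ (-1-2*H) := Real.rpow_pos_of_pos hs0 _
    rw [Real.norm_eq_abs, Real.norm_eq_abs, abs_of_nonneg (by positivity :
      (0:ℝ) ≤ a^2/2 * s ^ (1-2*H)), abs_of_nonneg
      (mul_nonneg (one_sub_cos_nonneg _) hrp.le)]
    have hb : 1 - Real.cos (a*s) ≤ a^2/2 * s^2 := by
      have := one_sub_cos_le_sq (a*s); nlinarith [sq_nonneg (a*s)]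
    calc (1 - Real.cos (a*s)) * s ^ (-1-2*H) ≤ (a^2/2 * s^2) * s ^ (-1-2*H) := by
          exact mul_le_mul_of_nonneg_right hb hrp.le
      _ = a^2/2 * s ^ (1-2*H) := by
          rw [mul_assoc, ← Real.rpow_natCast s 2, ← Real.rpow_add hs0,
            show ((2:ℕ):ℝ) + (-1-2*H) = 1-2*H by push_cast; ring]
  · -- on Ioi 1, dominate by 2 * s^(-1-2H)
    have hg : IntegrableOn (fun s : ℝ => 2 * s ^ (-1-2*H)) (Ioi (1:ℝ)) :=
      (integrableOn_Ioi_rpow_of_lt (by linarith) one_pos).const_mul 2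
    refine Integrable.mono hg ((measurable_w a (-1-2*H)).aestronglyMeasurable) ?_
    filter_upwards [ae_restrict_mem measurableSet_Ioi] with s hs
    have hs0 : (0:ℝ) < s := lt_trans one_pos hs
    have hrp : (0:ℝ) < s ^ (-1-2*H) := Real.rpow_pos_of_pos hs0 _
    rw [Real.norm_eq_abs, Real.norm_eq_abs, abs_of_nonneg (mul_nonneg (one_sub_cos_nonneg (a*s)) hrp.le),
      abs_of_nonneg (mul_nonneg (by norm_num : (0:ℝ) ≤ 2) hrp.le)]
    exact mul_le_mul_of_nonneg_right (one_sub_cos_le_two _) hrp.le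

noncomputable def Jc (H : ℝ) : ℝ := ∫ s in Ioi (0:ℝ), (1 - Real.cos s) * s ^ (-1-2*H)

lemma intW1 {H : ℝ} (hH0 : 0 < H) (hH1 : H < 1) :
    IntegrableOn (fun s => (1 - Real.cos s) * s ^ (-1-2*H)) (Ioi (0:ℝ)) :=
  (intW hH0 hH1 1).congr_fun (fun s _ => by simp only [one_mul]) measurableSet_Ioi

lemma Jc_pos {H : ℝ} (hH0 : 0 < H) (hH1 : H < 1) : 0 < Jc H := by
  have hc : (0:ℝ) < (π - π/2) * π ^ (-1-2*H) := by
    have h1 := Real.pi_pos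
    have h2 : (0:ℝ) < π ^ (-1-2*H) := Real.rpow_pos_of_pos Real.pi_pos _
    nlinarith
  have h1 : (π - π/2) * π ^ (-1-2*H) = ∫ s in Ioc (π/2) π, (π:ℝ) ^ (-1-2*H) := by
    rw [setIntegral_const]
    rw [Real.volume_real_Ioc_of_le (by linarith [Real.pi_pos])]
    rw [smul_eq_mul]
  have h2 : (∫ s in Ioc (π/2) π, (π:ℝ) ^ (-1-2*H))
      ≤ ∫ s in Ioc (π/2) π, (1 - Real.cos s) * s ^ (-1-2*H) := by
    refine setIntegral_mono_on ((integrableOn_const_iff).mpr ?_)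
      ((intW1 hH0 hH1).mono_set ?_) measurableSet_Ioc ?_
    · right; rw [Real.volume_Ioc]; exact ENNReal.ofReal_lt_top
    · intro s hs; exact lt_of_lt_of_le (by linarith [Real.pi_pos]) hs.1.le |>.trans_le le_rfl
      |> fun h => h
    · intro s hs
      have hs0 : (0:ℝ) < s := lt_of_lt_of_le (by linarith [Real.pi_pos]) hs.1.le
      have hcos : Real.cos s ≤ 0 :=
        Real.cos_nonpos_of_pi_div_two_le_of_le hs.1.le
          (by linarith [Real.pi_pos, hs.2])
      have hr : (π:ℝ) ^ (-1-2*H) ≤ s ^ (-1-2*H) :=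
        Real.rpow_le_rpow_of_nonpos hs0 hs.2 (by linarith)
      calc (π:ℝ) ^ (-1-2*H) ≤ s ^ (-1-2*H) := hr
        _ ≤ (1 - Real.cos s) * s ^ (-1-2*H) := by
            nlinarith [Real.rpow_pos_of_pos hs0 (-1-2*H)]
  have h3 : (∫ s in Ioc (π/2) π, (1 - Real.cos s) * s ^ (-1-2*H)) ≤ Jc H := by
    refine setIntegral_mono_set (intW1 hH0 hH1) ?_ ?_
    · filter_upwards [ae_restrict_mem measurableSet_Ioi] with s hs
      exact mul_nonneg (one_sub_cos_nonneg s) (Real.rpow_pos_of_pos hs _).le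
    · refine HasSubset.Subset.eventuallyLE ?_
      intro s hs; exact lt_of_lt_of_le (by linarith [Real.pi_pos]) hs.1.le
  linarith

lemma scalingJ {H : ℝ} (hH0 : 0 < H) (hH1 : H < 1) {a : ℝ} (ha : 0 ≤ a) :
    ∫ s in Ioi (0:ℝ), (1 - Real.cos (a*s)) * s ^ (-1-2*H) = a ^ (2*H) * Jc H := by
  rcases eq_or_lt_of_le ha with rfl | ha
  · simp [Real.zero_rpow (by positivity : 2*H ≠ 0)]
  · have key : ∀ s ∈ Ioi (0:ℝ),
        (1 - Real.cos (a*s)) * s ^ (-1-2*H)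
          = a ^ (1+2*H) * ((1 - Real.cos (a*s)) * (a*s) ^ (-1-2*H)) := by
      intro s hs
      rw [Real.mul_rpow ha.le (le_of_lt hs)]
      have h : a ^ (1+2*H) * a ^ (-1-2*H) = 1 := by
        rw [← Real.rpow_add ha, show (1+2*H) + (-1-2*H) = 0 by ring, Real.rpow_zero]
      linear_combination (-(1 - Real.cos (a*s))) * s ^ (-1-2*H) * h
    rw [setIntegral_congr_fun measurableSet_Ioi key, integral_const_mul]
    rw [integral_comp_mul_left_Ioi (fun u => (1 - Real.cos u) * u ^ (-1-2*H)) 0 ha]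
    rw [mul_zero, smul_eq_mul]
    have hJ : (∫ s in Ioi (0:ℝ), (1 - Real.cos s) * s ^ (-1-2*H)) = Jc H := rfl
    rw [hJ, ← mul_assoc]
    congr 1
    rw [← Real.rpow_neg_one a, ← Real.rpow_add ha,
      show (1+2*H) + (-1) = 2*H by ring]

lemma cos_mul_one_sub_cos (d s : ℝ) :
    Real.cos (d*s) * (1 - Real.cos s)
      = (1/2) * (1 - Real.cos ((d+1)*s)) + (1/2) * (1 - Real.cos ((d-1)*s))
        - (1 - Real.cos (d*s)) := by
  rw [show (d+1)*s = d*s+s by ring, show (d-1)*s = d*s-s by ring,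
    Real.cos_add, Real.cos_sub]
  ring

lemma intCosW {H : ℝ} (hH0 : 0 < H) (hH1 : H < 1) (d : ℝ) :
    IntegrableOn (fun s => Real.cos (d*s) * ((1 - Real.cos s) * s ^ (-1-2*H)))
      (Ioi (0:ℝ)) := by
  have h : IntegrableOn (fun s =>
      (1/2) * ((1 - Real.cos ((d+1)*s)) * s ^ (-1-2*H))
        + (1/2) * ((1 - Real.cos ((d-1)*s)) * s ^ (-1-2*H))
        - (1 - Real.cos (d*s)) * s ^ (-1-2*H)) (Ioi (0:ℝ)) :=
    (((intW hH0 hH1 (d+1)).const_mul (1/2)).add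
      ((intW hH0 hH1 (d-1)).const_mul (1/2))).sub (intW hH0 hH1 d)
  refine IntegrableOn.congr_fun h (fun s _ => ?_) measurableSet_Ioi
  have := cos_mul_one_sub_cos d s
  linear_combination (-(s ^ (-1-2*H))) * this

lemma cosIntId {H : ℝ} (hH0 : 0 < H) (hH1 : H < 1) {d : ℝ} (hd : 0 ≤ d) :
    ∫ s in Ioi (0:ℝ), Real.cos (d*s) * ((1 - Real.cos s) * s ^ (-1-2*H))
      = Jc H * (((d+1) ^ (2*H) + |d-1| ^ (2*H) - 2 * d ^ (2*H)) / 2) := by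
  have key : ∀ s ∈ Ioi (0:ℝ),
      Real.cos (d*s) * ((1 - Real.cos s) * s ^ (-1-2*H))
        = (1/2) * ((1 - Real.cos ((d+1)*s)) * s ^ (-1-2*H))
          + (1/2) * ((1 - Real.cos ((d-1)*s)) * s ^ (-1-2*H))
          - (1 - Real.cos (d*s)) * s ^ (-1-2*H) := by
    intro s _
    have := cos_mul_one_sub_cos d s
    linear_combination s ^ (-1-2*H) * this
  rw [setIntegral_congr_fun measurableSet_Ioi key]
  have hA : IntegrableOn (fun s => (1/2) * ((1 - Real.cos ((d+1)*s)) * s ^ (-1-2*H)))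
      (Ioi (0:ℝ)) := (intW hH0 hH1 (d+1)).const_mul (1/2)
  have hB : IntegrableOn (fun s => (1/2) * ((1 - Real.cos ((d-1)*s)) * s ^ (-1-2*H)))
      (Ioi (0:ℝ)) := (intW hH0 hH1 (d-1)).const_mul (1/2)
  have hAB : IntegrableOn (fun s => (1/2) * ((1 - Real.cos ((d+1)*s)) * s ^ (-1-2*H))
      + (1/2) * ((1 - Real.cos ((d-1)*s)) * s ^ (-1-2*H))) (Ioi (0:ℝ)) := hA.add hB
  rw [integral_sub hAB (intW hH0 hH1 d), integral_add hA hB,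
    integral_const_mul, integral_const_mul]
  have e2 : ∫ s in Ioi (0:ℝ), (1 - Real.cos ((d-1)*s)) * s ^ (-1-2*H)
      = |d-1| ^ (2*H) * Jc H := by
    rw [← scalingJ hH0 hH1 (abs_nonneg (d-1))]
    refine setIntegral_congr_fun measurableSet_Ioi (fun s hs => ?_)
    have hs0 : (0:ℝ) < s := hs
    rw [show |d-1| * s = |(d-1)*s| by rw [abs_mul, abs_of_pos hs0], Real.cos_abs]
  rw [scalingJ hH0 hH1 (by linarith : (0:ℝ) ≤ d+1), scalingJ hH0 hH1 hd, e2]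
  ring

noncomputable def Fq (N : ℕ) (y : Fin N → ℝ) (s : ℝ) : ℝ :=
  (∑ k : Fin N, y k * Real.cos ((k:ℝ) * s))^2 + (∑ k : Fin N, y k * Real.sin ((k:ℝ) * s))^2

lemma Fq_eq (N : ℕ) (y : Fin N → ℝ) (s : ℝ) :
    ∑ i : Fin N, ∑ j : Fin N, y i * y j * Real.cos (((i:ℝ)-(j:ℝ))*s) = Fq N y s := by
  have h : ∀ i j : Fin N, y i * y j * Real.cos (((i:ℝ)-(j:ℝ))*s)
      = (y i * Real.cos ((i:ℝ)*s)) * (y j * Real.cos ((j:ℝ)*s))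
        + (y i * Real.sin ((i:ℝ)*s)) * (y j * Real.sin ((j:ℝ)*s)) := by
    intro i j
    rw [show ((i:ℝ)-(j:ℝ))*s = (i:ℝ)*s - (j:ℝ)*s by ring, Real.cos_sub]
    ring
  simp_rw [h, Finset.sum_add_distrib]
  rw [Fq, sq, sq, Finset.sum_mul_sum, Finset.sum_mul_sum]

lemma Fq_nonneg (N : ℕ) (y : Fin N → ℝ) (s : ℝ) : 0 ≤ Fq N y s := by
  rw [Fq]; positivity

lemma Fq_continuous (N : ℕ) (y : Fin N → ℝ) : Continuous (Fq N y) := by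
  unfold Fq; fun_prop

lemma Fq_le (N : ℕ) (y : Fin N → ℝ) (s : ℝ) :
    Fq N y s ≤ (N:ℝ) * ∑ k : Fin N, (y k)^2 := by
  have h1 : Fq N y s ≤ (∑ k : Fin N, |y k|)^2 := by
    rw [← Fq_eq, sq, Finset.sum_mul_sum]
    refine Finset.sum_le_sum (fun i _ => Finset.sum_le_sum (fun j _ => ?_))
    calc y i * y j * Real.cos (((i:ℝ)-(j:ℝ))*s) ≤ |y i * y j * Real.cos (((i:ℝ)-(j:ℝ))*s)| :=
          le_abs_self _
      _ ≤ |y i| * |y j| := by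
          rw [abs_mul, abs_mul]
          exact mul_le_of_le_one_right (by positivity) (Real.abs_cos_le_one _)
  have h2 : (∑ k : Fin N, |y k|)^2 ≤ (N:ℝ) * ∑ k : Fin N, |y k|^2 := by
    simpa using sq_sum_le_card_mul_sum_sq (s := Finset.univ) (f := fun k : Fin N => |y k|)
  simp_rw [sq_abs] at h2
  linarith

set_option maxHeartbeats 1000000 in
lemma integral_Fq (N : ℕ) (y : Fin N → ℝ) :
    ∫ s in (0:ℝ)..π, Fq N y s = π * ∑ k : Fin N, (y k)^2 := by
  have each : ∀ i j : Fin N,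
      (∫ s in (0:ℝ)..π, y i * y j * Real.cos (((i:ℝ)-(j:ℝ))*s))
        = if i = j then y i * y j * π else 0 := by
    intro i j
    rcases eq_or_ne i j with rfl | hij
    · simp [intervalIntegral.integral_const_mul]
      ring
    · have hm : ((i:ℝ) - (j:ℝ)) ≠ 0 := by
        have : (i:ℝ) ≠ (j:ℝ) := by
          simp only [ne_eq, Nat.cast_injective.eq_iff]
          exact_mod_cast fun h => hij (Fin.ext h)
        exact sub_ne_zero_of_ne this
      rw [if_neg hij, intervalIntegral.integral_const_mul]
      have : (∫ s in (0:ℝ)..π, Real.cos (((i:ℝ)-(j:ℝ))*s)) = 0 := by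
        rw [intervalIntegral.integral_comp_mul_left Real.cos hm]
        rw [integral_cos]
        have : ((i:ℝ)-(j:ℝ)) * π = (((i:ℤ) - (j:ℤ) : ℤ) : ℝ) * π := by push_cast; ring
        rw [mul_zero, this, Real.sin_int_mul_pi, Real.sin_zero]
        simp
      rw [this, mul_zero]
  have hInt : ∀ i : Fin N, ∀ j : Fin N, IntervalIntegrable
      (fun s => y i * y j * Real.cos (((i:ℝ)-(j:ℝ))*s)) volume 0 π := by
    intro i j; exact (Continuous.intervalIntegrable (by fun_prop) _ _)
  calc ∫ s in (0:ℝ)..π, Fq N y s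
      = ∫ s in (0:ℝ)..π, ∑ i : Fin N, ∑ j : Fin N, y i * y j * Real.cos (((i:ℝ)-(j:ℝ))*s) := by
        refine intervalIntegral.integral_congr (fun s _ => ?_)
        rw [Fq_eq]
    _ = ∑ i : Fin N, ∑ j : Fin N, ∫ s in (0:ℝ)..π, y i * y j * Real.cos (((i:ℝ)-(j:ℝ))*s) := by
        have h1 : ∀ i ∈ (Finset.univ : Finset (Fin N)), IntervalIntegrable
            (fun s => ∑ j : Fin N, y i * y j * Real.cos (((i:ℝ)-(j:ℝ))*s)) volume 0 π := by
          intro i _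
          have h := IntervalIntegrable.sum (μ := volume) (a := (0:ℝ)) (b := π)
            (Finset.univ : Finset (Fin N))
            (f := fun j s => y i * y j * Real.cos (((i:ℝ)-(j:ℝ))*s)) (fun j _ => hInt i j)
          simpa [Finset.sum_fn] using h
        rw [intervalIntegral.integral_finset_sum
          (f := fun (i : Fin N) (s : ℝ) => ∑ j : Fin N, y i * y j * Real.cos (((i:ℝ)-(j:ℝ))*s))
          h1]
        exact Finset.sum_congr rfl (fun i _ =>
          intervalIntegral.integral_finset_sum (fun j _ => hInt i j))
    _ = π * ∑ k : Fin N, (y k)^2 := by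
        simp_rw [each]
        simp [Finset.sum_ite_eq, Finset.mul_sum]
        exact Finset.sum_congr rfl (fun i _ => by ring)

lemma cos_abs_mul (x s : ℝ) : Real.cos (|x| * s) = Real.cos (x * s) := by
  rcases abs_cases x with ⟨h,_⟩|⟨h,_⟩ <;> rw [h]
  rw [neg_mul, Real.cos_neg]

lemma entry_eq {H : ℝ} (hH0 : 0 < H) (hH1 : H < 1) {N : ℕ} (i j : Fin N) :
    Jc H * fgnCov H N i j
      = (1/(N:ℝ))^(2*H) *
        ∫ s in Ioi (0:ℝ), Real.cos (((i:ℝ)-(j:ℝ))*s) * ((1 - Real.cos s) * s ^ (-1-2*H)) := by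
  have h := cosIntId hH0 hH1 (abs_nonneg ((i:ℝ)-(j:ℝ)))
  have hcongr : (∫ s in Ioi (0:ℝ),
        Real.cos (|(i:ℝ)-(j:ℝ)| * s) * ((1 - Real.cos s) * s ^ (-1-2*H)))
      = ∫ s in Ioi (0:ℝ), Real.cos (((i:ℝ)-(j:ℝ))*s) * ((1 - Real.cos s) * s ^ (-1-2*H)) := by
    congr 1; funext s; rw [cos_abs_mul]
  rw [← hcongr, h, fgnCov]
  ring

lemma quadForm_repr {H : ℝ} (hH0 : 0 < H) (hH1 : H < 1) {N : ℕ} (y : Fin N → ℝ) :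
    Jc H * (y ⬝ᵥ fgnCov H N *ᵥ y)
      = (1/(N:ℝ))^(2*H) *
        ∫ s in Ioi (0:ℝ), Fq N y s * ((1 - Real.cos s) * s ^ (-1-2*H)) := by
  have hd : y ⬝ᵥ fgnCov H N *ᵥ y = ∑ i : Fin N, ∑ j : Fin N, y i * y j * fgnCov H N i j := by
    simp [dotProduct, Matrix.mulVec, Finset.mul_sum]
    exact Finset.sum_congr rfl fun i _ => Finset.sum_congr rfl fun j _ => by ring
  rw [hd, Finset.mul_sum]
  have step1 : ∀ i : Fin N, Jc H * ∑ j : Fin N, y i * y j * fgnCov H N i j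
      = ∑ j : Fin N, (1/(N:ℝ))^(2*H) * ∫ s in Ioi (0:ℝ),
          y i * y j * Real.cos (((i:ℝ)-(j:ℝ))*s) * ((1 - Real.cos s) * s ^ (-1-2*H)) := by
    intro i
    rw [Finset.mul_sum]
    refine Finset.sum_congr rfl fun j _ => ?_
    have h2 : (∫ s in Ioi (0:ℝ),
          y i * y j * Real.cos (((i:ℝ)-(j:ℝ))*s) * ((1 - Real.cos s) * s ^ (-1-2*H)))
        = y i * y j * ∫ s in Ioi (0:ℝ),
            Real.cos (((i:ℝ)-(j:ℝ))*s) * ((1 - Real.cos s) * s ^ (-1-2*H)) := by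
      rw [← integral_const_mul]
      congr 1; funext s; ring
    rw [h2]
    linear_combination (y i * y j) * (entry_eq hH0 hH1 i j)
  simp_rw [step1]
  -- now interchange the double sum and the integral
  have hint : ∀ i j : Fin N, IntegrableOn (fun s =>
      y i * y j * Real.cos (((i:ℝ)-(j:ℝ))*s) * ((1 - Real.cos s) * s ^ (-1-2*H)))
      (Ioi (0:ℝ)) := by
    intro i j
    have h := (intCosW hH0 hH1 ((i:ℝ)-(j:ℝ))).const_mul (y i * y j)
    refine IntegrableOn.congr_fun h (fun s _ => by ring) measurableSet_Ioi
  have hii : ∀ i : Fin N, IntegrableOn (fun s => ∑ j : Fin N,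
      y i * y j * Real.cos (((i:ℝ)-(j:ℝ))*s) * ((1 - Real.cos s) * s ^ (-1-2*H)))
      (Ioi (0:ℝ)) := fun i => integrable_finset_sum _ (fun j _ => hint i j)
  have hswap : ∑ i : Fin N, ∑ j : Fin N, ∫ s in Ioi (0:ℝ),
        y i * y j * Real.cos (((i:ℝ)-(j:ℝ))*s) * ((1 - Real.cos s) * s ^ (-1-2*H))
      = ∫ s in Ioi (0:ℝ), ∑ i : Fin N, ∑ j : Fin N,
          y i * y j * Real.cos (((i:ℝ)-(j:ℝ))*s) * ((1 - Real.cos s) * s ^ (-1-2*H)) := by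
    calc ∑ i : Fin N, ∑ j : Fin N, ∫ s in Ioi (0:ℝ),
          y i * y j * Real.cos (((i:ℝ)-(j:ℝ))*s) * ((1 - Real.cos s) * s ^ (-1-2*H))
        = ∑ i : Fin N, ∫ s in Ioi (0:ℝ), ∑ j : Fin N,
            y i * y j * Real.cos (((i:ℝ)-(j:ℝ))*s) * ((1 - Real.cos s) * s ^ (-1-2*H)) :=
          Finset.sum_congr rfl (fun i _ => (integral_finset_sum _ (fun j _ => hint i j)).symm)
      _ = ∫ s in Ioi (0:ℝ), ∑ i : Fin N, ∑ j : Fin N,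
            y i * y j * Real.cos (((i:ℝ)-(j:ℝ))*s) * ((1 - Real.cos s) * s ^ (-1-2*H)) :=
          (integral_finset_sum _ (fun i _ => hii i)).symm
  simp_rw [← Finset.mul_sum]
  rw [hswap]
  congr 1
  refine setIntegral_congr_fun measurableSet_Ioi (fun s _ => ?_)
  rw [← Fq_eq N y s, Finset.sum_mul]
  exact Finset.sum_congr rfl (fun i _ => by rw [Finset.sum_mul])

lemma intFqW {H : ℝ} (hH0 : 0 < H) (hH1 : H < 1) {N : ℕ} (y : Fin N → ℝ) :
    IntegrableOn (fun s => Fq N y s * ((1 - Real.cos s) * s ^ (-1-2*H))) (Ioi (0:ℝ)) := by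
  have hint : ∀ i j : Fin N, IntegrableOn (fun s =>
      y i * y j * Real.cos (((i:ℝ)-(j:ℝ))*s) * ((1 - Real.cos s) * s ^ (-1-2*H)))
      (Ioi (0:ℝ)) := by
    intro i j
    have h := (intCosW hH0 hH1 ((i:ℝ)-(j:ℝ))).const_mul (y i * y j)
    exact IntegrableOn.congr_fun h (fun s _ => by ring) measurableSet_Ioi
  have hii : ∀ i : Fin N, IntegrableOn (fun s => ∑ j : Fin N,
      y i * y j * Real.cos (((i:ℝ)-(j:ℝ))*s) * ((1 - Real.cos s) * s ^ (-1-2*H)))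
      (Ioi (0:ℝ)) := fun i => integrable_finset_sum _ (fun j _ => hint i j)
  have hall : IntegrableOn (fun s => ∑ i : Fin N, ∑ j : Fin N,
      y i * y j * Real.cos (((i:ℝ)-(j:ℝ))*s) * ((1 - Real.cos s) * s ^ (-1-2*H)))
      (Ioi (0:ℝ)) := integrable_finset_sum _ (fun i _ => hii i)
  refine IntegrableOn.congr_fun hall (fun s _ => ?_) measurableSet_Ioi
  rw [← Fq_eq N y s, Finset.sum_mul]
  exact Finset.sum_congr rfl (fun i _ => by rw [Finset.sum_mul])

noncomputable def cLow (H : ℝ) : ℝ :=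
  (π * Jc H)⁻¹ * min ((π/2) ^ (1-2*H)) (π ^ (1-2*H))

lemma cLow_pos {H : ℝ} (hH0 : 0 < H) (hH1 : H < 1) : 0 < cLow H := by
  have h1 := Jc_pos hH0 hH1
  have h2 : (0:ℝ) < (π/2) ^ (1-2*H) := Real.rpow_pos_of_pos (by positivity) _
  have h3 : (0:ℝ) < π ^ (1-2*H) := Real.rpow_pos_of_pos Real.pi_pos _
  have h4 : (0:ℝ) < π * Jc H := by positivity
  exact mul_pos (inv_pos.mpr h4) (lt_min h2 h3)

lemma quad_lower {H : ℝ} (hH0 : 0 < H) (hH1 : H < 1) {N : ℕ} (hN : 1 ≤ N)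
    (y : Fin N → ℝ) :
    cLow H * ((1/(N:ℝ)) ^ (max 1 (2*H)) * ∑ k : Fin N, (y k)^2)
      ≤ y ⬝ᵥ fgnCov H N *ᵥ y := by
  have hπ := Real.pi_pos
  have hN0 : (0:ℝ) < N := by exact_mod_cast hN
  have hδ0 : (0:ℝ) < 1/(N:ℝ) := by positivity
  have hδ1 : (1:ℝ)/(N:ℝ) ≤ 1 := by
    rw [div_le_one hN0]; exact_mod_cast hN
  set S := ∑ k : Fin N, (y k)^2 with hS
  have hS0 : 0 ≤ S := Finset.sum_nonneg (fun k _ => sq_nonneg _)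
  set a := π/(2*(N:ℝ)) with ha
  have ha0 : 0 < a := by positivity
  have haπ : a ≤ π/2 := by
    have hN1 : (1:ℝ) ≤ (N:ℝ) := by exact_mod_cast hN
    rw [ha, div_le_div_iff₀ (by positivity) (by positivity)]
    nlinarith
  have haπ' : a ≤ π := by linarith
  set W : ℝ → ℝ := fun s => (1 - Real.cos s) * s ^ (-1-2*H) with hW
  set B := (2/π^2) * min (a ^ (1-2*H)) (π ^ (1-2*H)) with hB
  have hB0 : 0 ≤ B := by
    have : (0:ℝ) < a ^ (1-2*H) := Real.rpow_pos_of_pos ha0 _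
    have : (0:ℝ) < π ^ (1-2*H) := Real.rpow_pos_of_pos hπ _
    positivity
  -- step 1: pointwise bound W s ≥ B on Ioc a π
  have hWB : ∀ s ∈ Ioc a π, B ≤ W s := by
    intro s hs
    have hs0 : 0 < s := lt_trans ha0 hs.1
    have h1 : 2/π^2 * s^2 ≤ 1 - Real.cos s := one_sub_cos_lower hs0.le hs.2
    have hrp : (0:ℝ) < s ^ (-1-2*H) := Real.rpow_pos_of_pos hs0 _
    have h2 : s^2 * s ^ (-1-2*H) = s ^ (1-2*H) := by
      rw [← Real.rpow_natCast s 2, ← Real.rpow_add hs0,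
        show ((2:ℕ):ℝ) + (-1-2*H) = 1-2*H by push_cast; ring]
    have h3 : min (a ^ (1-2*H)) (π ^ (1-2*H)) ≤ s ^ (1-2*H) := by
      rcases le_or_gt 0 (1-2*H) with he | he
      · exact le_trans (min_le_left _ _) (Real.rpow_le_rpow ha0.le hs.1.le he)
      · exact le_trans (min_le_right _ _) (Real.rpow_le_rpow_of_nonpos hs0 hs.2 he.le)
    calc B ≤ (2/π^2) * s ^ (1-2*H) := by
          rw [hB]; exact mul_le_mul_of_nonneg_left h3 (by positivity)
      _ = (2/π^2 * s^2) * s ^ (-1-2*H) := by rw [mul_assoc, h2]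
      _ ≤ (1 - Real.cos s) * s ^ (-1-2*H) := mul_le_mul_of_nonneg_right h1 hrp.le
      _ = W s := rfl
  -- step 2: ∫_{Ioc a π} Fq ≥ (π/2) S
  have hFint : ∀ b c : ℝ, IntervalIntegrable (Fq N y) volume b c :=
    fun b c => (Fq_continuous N y).intervalIntegrable b c
  have hsplit : (∫ s in a..π, Fq N y s) = (∫ s in (0:ℝ)..π, Fq N y s) - ∫ s in (0:ℝ)..a, Fq N y s := by
    rw [← intervalIntegral.integral_add_adjacent_intervals (hFint 0 a) (hFint a π)]
    ring
  have hsmall : (∫ s in (0:ℝ)..a, Fq N y s) ≤ (N:ℝ) * (a * S) := by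
    have := intervalIntegral.integral_mono_on ha0.le (hFint 0 a)
      (intervalIntegrable_const (c := (N:ℝ) * S)) (fun s _ => Fq_le N y s)
    simpa using this
  have haN : (N:ℝ) * (a * S) ≤ (π/2) * S := by
    rw [ha]
    have : (N:ℝ) * (π / (2*(N:ℝ)) * S) = (π/2) * S := by field_simp
    rw [this]
  have hb2 : (π/2) * S ≤ ∫ s in a..π, Fq N y s := by
    rw [hsplit, integral_Fq]
    have := le_trans hsmall haN
    linarith
  -- step 3: ∫_{Ioi 0} Fq*W ≥ B * (π/2) * S
  have hIocInt : IntegrableOn (fun s => Fq N y s * W s) (Ioc a π) :=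
    (intFqW hH0 hH1 y).mono_set (fun s hs => lt_trans ha0 hs.1)
  have hstep3 : B * ((π/2) * S) ≤ ∫ s in Ioi (0:ℝ), Fq N y s * W s := by
    have h1 : B * ((π/2) * S) ≤ B * ∫ s in a..π, Fq N y s :=
      mul_le_mul_of_nonneg_left hb2 hB0
    have h2 : B * ∫ s in a..π, Fq N y s = ∫ s in Ioc a π, B * Fq N y s := by
      rw [intervalIntegral.integral_of_le haπ', ← integral_const_mul]
    have h3 : (∫ s in Ioc a π, B * Fq N y s) ≤ ∫ s in Ioc a π, Fq N y s * W s := by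
      refine setIntegral_mono_on ?_ hIocInt measurableSet_Ioc ?_
      · exact (((continuous_const.mul (Fq_continuous N y))).continuousOn.integrableOn_compact
          isCompact_Icc).mono_set Ioc_subset_Icc_self
      · intro s hs
        calc B * Fq N y s ≤ W s * Fq N y s :=
              mul_le_mul_of_nonneg_right (hWB s hs) (Fq_nonneg N y s)
          _ = Fq N y s * W s := by ring
    have h4 : (∫ s in Ioc a π, Fq N y s * W s) ≤ ∫ s in Ioi (0:ℝ), Fq N y s * W s := by
      refine setIntegral_mono_set (intFqW hH0 hH1 y) ?_ ?_
      · filter_upwards [ae_restrict_mem measurableSet_Ioi] with s hs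
        exact mul_nonneg (Fq_nonneg N y s)
          (mul_nonneg (one_sub_cos_nonneg s) (Real.rpow_pos_of_pos hs _).le)
      · exact HasSubset.Subset.eventuallyLE (fun s hs => lt_trans ha0 hs.1)
    linarith
  -- step 4: assemble via quadForm_repr
  have hrepr := quadForm_repr hH0 hH1 (N := N) y
  have hJ := Jc_pos hH0 hH1
  have hδ2H : (0:ℝ) < (1/(N:ℝ)) ^ (2*H) := Real.rpow_pos_of_pos hδ0 _
  -- exponent juggling : δ^{2H} * min(a^{1-2H}, π^{1-2H}) ≥ min((π/2)^{1-2H}, π^{1-2H}) * δ^{max}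
  have hexp : min ((π/2) ^ (1-2*H)) (π ^ (1-2*H)) * (1/(N:ℝ)) ^ (max 1 (2*H))
      ≤ (1/(N:ℝ)) ^ (2*H) * min (a ^ (1-2*H)) (π ^ (1-2*H)) := by
    rw [mul_min_of_nonneg _ _ hδ2H.le]
    refine le_min ?_ ?_
    · -- ≤ δ^{2H} * a^{1-2H} = (π/2)^{1-2H} * δ
      have hax : a = (π/2) * (1/(N:ℝ)) := by rw [ha]; field_simp
      have h5 : (1/(N:ℝ)) ^ (2*H) * a ^ (1-2*H)
          = (π/2) ^ (1-2*H) * (1/(N:ℝ)) := by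
        rw [hax, Real.mul_rpow (by positivity) hδ0.le, ← mul_assoc,
          mul_comm ((1/(N:ℝ)) ^ (2*H)), mul_assoc, ← Real.rpow_add hδ0]
        norm_num
      rw [h5]
      have h6 : (1/(N:ℝ)) ^ (max 1 (2*H)) ≤ (1/(N:ℝ)) ^ (1:ℝ) :=
        Real.rpow_le_rpow_of_exponent_ge hδ0 hδ1 (le_max_left _ _)
      calc min ((π/2) ^ (1-2*H)) (π ^ (1-2*H)) * (1/(N:ℝ)) ^ (max 1 (2*H))
          ≤ (π/2) ^ (1-2*H) * (1/(N:ℝ)) ^ (max 1 (2*H)) :=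
            mul_le_mul_of_nonneg_right (min_le_left _ _)
              (Real.rpow_pos_of_pos hδ0 _).le
        _ ≤ (π/2) ^ (1-2*H) * (1/(N:ℝ)) ^ (1:ℝ) :=
            mul_le_mul_of_nonneg_left h6 (Real.rpow_pos_of_pos (by positivity) _).le
        _ = (π/2) ^ (1-2*H) * (1/(N:ℝ)) := by rw [Real.rpow_one]
    · have h6 : (1/(N:ℝ)) ^ (max 1 (2*H)) ≤ (1/(N:ℝ)) ^ (2*H) :=
        Real.rpow_le_rpow_of_exponent_ge hδ0 hδ1 (le_max_right _ _)
      calc min ((π/2) ^ (1-2*H)) (π ^ (1-2*H)) * (1/(N:ℝ)) ^ (max 1 (2*H))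
          ≤ π ^ (1-2*H) * (1/(N:ℝ)) ^ (max 1 (2*H)) :=
            mul_le_mul_of_nonneg_right (min_le_right _ _)
              (Real.rpow_pos_of_pos hδ0 _).le
        _ ≤ π ^ (1-2*H) * (1/(N:ℝ)) ^ (2*H) :=
            mul_le_mul_of_nonneg_left h6 (Real.rpow_pos_of_pos hπ _).le
        _ = (1/(N:ℝ)) ^ (2*H) * π ^ (1-2*H) := by ring
  -- combine
  have hmain : Jc H * (cLow H * ((1/(N:ℝ)) ^ (max 1 (2*H)) * S))
      ≤ Jc H * (y ⬝ᵥ fgnCov H N *ᵥ y) := by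
    rw [hrepr]
    have h7 : (1/(N:ℝ))^(2*H) * (B * ((π/2) * S))
        ≤ (1/(N:ℝ))^(2*H) * ∫ s in Ioi (0:ℝ), Fq N y s * W s :=
      mul_le_mul_of_nonneg_left hstep3 hδ2H.le
    refine le_trans ?_ h7
    rw [hB, cLow]
    have hπJ : (0:ℝ) < π * Jc H := by positivity
    have expand : (1/(N:ℝ))^(2*H) * ((2/π^2) * min (a ^ (1-2*H)) (π ^ (1-2*H)) * ((π/2) * S))
        = ((1/(N:ℝ))^(2*H) * min (a ^ (1-2*H)) (π ^ (1-2*H))) * (S / π) := by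
      field_simp
    have expand2 : Jc H * ((π * Jc H)⁻¹ * min ((π/2) ^ (1-2*H)) (π ^ (1-2*H)) *
          ((1/(N:ℝ)) ^ (max 1 (2*H)) * S))
        = (min ((π/2) ^ (1-2*H)) (π ^ (1-2*H)) * (1/(N:ℝ)) ^ (max 1 (2*H))) * (S / π) := by
      field_simp
    rw [expand, expand2]
    exact mul_le_mul_of_nonneg_right hexp (by positivity)
  exact le_of_mul_le_mul_left hmain hJ

lemma fgnCov_isHermitian (H : ℝ) (N : ℕ) : (fgnCov H N).IsHermitian := by
  ext i j
  simp only [Matrix.conjTranspose_apply, fgnCov, star_trivial, abs_sub_comm ((j:ℝ)) ((i:ℝ))]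

lemma fgnCov_posDef {H : ℝ} (hH0 : 0 < H) (hH1 : H < 1) {N : ℕ} (hN : 1 ≤ N) :
    (fgnCov H N).PosDef := by
  refine posDef_iff_dotProduct_mulVec.mpr ⟨fgnCov_isHermitian H N, fun z hz => ?_⟩
  have hstar : star z = z := funext (fun i => rfl)
  rw [hstar]
  have hsum : 0 < ∑ k : Fin N, (z k)^2 := by
    rcases Function.ne_iff.mp hz with ⟨k, hk⟩
    exact Finset.sum_pos' (fun i _ => sq_nonneg _) ⟨k, Finset.mem_univ k, by
      have hk' : z k ≠ 0 := hk
      nlinarith [sq_abs (z k), pow_pos (abs_pos.mpr hk') 2]⟩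
  have hδ : (0:ℝ) < (1/(N:ℝ)) ^ (max 1 (2*H)) := by
    have : (0:ℝ) < (N:ℝ) := by exact_mod_cast hN
    exact Real.rpow_pos_of_pos (by positivity) _
  calc (0:ℝ) < cLow H * ((1/(N:ℝ)) ^ (max 1 (2*H)) * ∑ k : Fin N, (z k)^2) := by
        have := cLow_pos hH0 hH1; positivity
    _ ≤ z ⬝ᵥ fgnCov H N *ᵥ z := quad_lower hH0 hH1 hN z

lemma inv_quad_bound {H : ℝ} (hH0 : 0 < H) (hH1 : H < 1) {N : ℕ} (hN : 1 ≤ N)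
    (x : Fin N → ℝ) :
    0 ≤ x ⬝ᵥ (fgnCov H N)⁻¹ *ᵥ x ∧
      x ⬝ᵥ (fgnCov H N)⁻¹ *ᵥ x
        ≤ (cLow H * (1/(N:ℝ)) ^ (max 1 (2*H)))⁻¹ * ∑ k : Fin N, (x k)^2 := by
  have hPD := fgnCov_posDef hH0 hH1 (N := N) hN
  have hdet : IsUnit (fgnCov H N).det := hPD.det_pos.ne'.isUnit
  set P := fgnCov H N with hP
  set z := P⁻¹ *ᵥ x with hzdef
  have hPz : P *ᵥ z = x := by
    rw [hzdef, Matrix.mulVec_mulVec, Matrix.mul_nonsing_inv _ hdet, Matrix.one_mulVec]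
  have hval : x ⬝ᵥ P⁻¹ *ᵥ x = z ⬝ᵥ P *ᵥ z := by
    calc x ⬝ᵥ P⁻¹ *ᵥ x = x ⬝ᵥ z := rfl
      _ = z ⬝ᵥ x := dotProduct_comm _ _
      _ = z ⬝ᵥ P *ᵥ z := by rw [hPz]
  set ε := cLow H * (1/(N:ℝ)) ^ (max 1 (2*H)) with hε
  have hε0 : 0 < ε := by
    have h1 := cLow_pos hH0 hH1
    have h2 : (0:ℝ) < (N:ℝ) := by exact_mod_cast hN
    have : (0:ℝ) < (1/(N:ℝ)) ^ (max 1 (2*H)) := Real.rpow_pos_of_pos (by positivity) _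
    positivity
  have hzS : 0 ≤ ∑ k : Fin N, (z k)^2 := Finset.sum_nonneg (fun k _ => sq_nonneg _)
  have hlow : ε * ∑ k : Fin N, (z k)^2 ≤ z ⬝ᵥ P *ᵥ z := by
    have := quad_lower hH0 hH1 hN z
    rw [hε]; linarith [this]
  have hnonneg : 0 ≤ x ⬝ᵥ P⁻¹ *ᵥ x := by
    rw [hval]; exact le_trans (by positivity) hlow
  refine ⟨hnonneg, ?_⟩
  -- Cauchy–Schwarz
  have hCS : (x ⬝ᵥ P⁻¹ *ᵥ x)^2 ≤ (∑ k : Fin N, (x k)^2) * ∑ k : Fin N, (z k)^2 := by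
    have h1 : x ⬝ᵥ P⁻¹ *ᵥ x = ∑ k : Fin N, x k * z k := by rw [hzdef]; rfl
    rw [h1]
    exact Finset.sum_mul_sq_le_sq_mul_sq Finset.univ x z
  have hz2 : ∑ k : Fin N, (z k)^2 ≤ (x ⬝ᵥ P⁻¹ *ᵥ x) / ε := by
    rw [le_div_iff₀ hε0, mul_comm, hval]
    exact hlow
  set v := x ⬝ᵥ P⁻¹ *ᵥ x with hv
  set Sx := ∑ k : Fin N, (x k)^2 with hSx
  have hSx0 : 0 ≤ Sx := Finset.sum_nonneg (fun k _ => sq_nonneg _)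
  rcases eq_or_lt_of_le hnonneg with h0 | h0
  · rw [← h0]
    positivity
  · have h2 : v^2 ≤ Sx * (v / ε) :=
      le_trans hCS (mul_le_mul_of_nonneg_left hz2 hSx0)
    have h5 := mul_le_mul_of_nonneg_left h2 hε0.le
    have he : ε * (Sx * (v / ε)) = Sx * v := by field_simp
    rw [he] at h5
    have hεv : (ε * v) * v ≤ Sx * v := by nlinarith [h5]
    have h6 : ε * v ≤ Sx := le_of_mul_le_mul_right hεv h0
    rw [inv_mul_eq_div, le_div_iff₀ hε0]
    linarith

end Auxiliary

open Set Real in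
/-- for `0 < H < 1` and `X : [0,1] → ℝ` Lipschitz with constant `M`,
there is `C > 0` depending only on `H` with
`0 ≤ σ̂²_N ≤ C M² δ^{2 − max(1, 2H)}` for all `N ≥ 1` (with `δ = 1/N`); in
particular `σ̂²_N → 0` as `N → ∞`. -/
theorem mleStat_vanishes_for_lipschitz (H : ℝ) (hH0 : 0 < H) (hH1 : H < 1) :
    ∃ C : ℝ, 0 < C ∧ ∀ (X : ℝ → ℝ) (M : ℝ),
      (∀ s ∈ Set.Icc (0:ℝ) 1, ∀ t ∈ Set.Icc (0:ℝ) 1, |X t - X s| ≤ M * |t - s|) →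
      ((∀ N : ℕ, 1 ≤ N →
          0 ≤ mleStat H X N ∧
          mleStat H X N ≤ C * M ^ 2 * (1 / (N : ℝ)) ^ (2 - max 1 (2 * H))) ∧
        Tendsto (fun N => mleStat H X N) atTop (nhds 0)) := by
  refine ⟨(cLow H)⁻¹, inv_pos.mpr (cLow_pos hH0 hH1), fun X M hLip => ?_⟩
  have hmax2 : max 1 (2*H) < 2 := max_lt (by norm_num) (by linarith)
  have key : ∀ N : ℕ, 1 ≤ N →
      0 ≤ mleStat H X N ∧
      mleStat H X N ≤ (cLow H)⁻¹ * M ^ 2 * (1 / (N : ℝ)) ^ (2 - max 1 (2 * H)) := by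
    intro N hN
    have hN0 : (0:ℝ) < N := by exact_mod_cast hN
    have hδ0 : (0:ℝ) < 1/(N:ℝ) := by positivity
    set x := increments X N with hx
    have hq := inv_quad_bound hH0 hH1 hN x
    constructor
    · rw [mleStat]
      exact mul_nonneg hδ0.le hq.1
    · -- increments bound
      have hinc : ∀ i : Fin N, |x i| ≤ M * (1/(N:ℝ)) := by
        intro i
        have hi : ((i:ℕ):ℝ) + 1 ≤ (N:ℝ) := by exact_mod_cast Nat.succ_le_of_lt i.isLt
        have hi0 : (0:ℝ) ≤ ((i:ℕ):ℝ) := Nat.cast_nonneg _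
        have hs : ((i:ℝ)) * (1/(N:ℝ)) ∈ Set.Icc (0:ℝ) 1 := by
          constructor
          · positivity
          · rw [mul_one_div, div_le_one hN0]; linarith
        have ht : (((i:ℝ)) + 1) * (1/(N:ℝ)) ∈ Set.Icc (0:ℝ) 1 := by
          constructor
          · positivity
          · rw [mul_one_div, div_le_one hN0]; linarith
        have h := hLip _ hs _ ht
        have habs : |(((i:ℝ)) + 1) * (1/(N:ℝ)) - ((i:ℝ)) * (1/(N:ℝ))| = 1/(N:ℝ) := by
          rw [show (((i:ℝ)) + 1) * (1/(N:ℝ)) - ((i:ℝ)) * (1/(N:ℝ)) = 1/(N:ℝ) by ring]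
          exact abs_of_pos hδ0
        rw [habs] at h
        exact h
      have hSx : ∑ k : Fin N, (x k)^2 ≤ M^2 * (1/(N:ℝ)) := by
        have hMδ : 0 ≤ M * (1/(N:ℝ)) := le_trans (abs_nonneg _) (hinc ⟨0, hN⟩)
        have : ∀ k : Fin N, (x k)^2 ≤ (M * (1/(N:ℝ)))^2 := by
          intro k
          rw [← sq_abs]
          exact pow_le_pow_left₀ (abs_nonneg _) (hinc k) 2
        calc ∑ k : Fin N, (x k)^2 ≤ ∑ _k : Fin N, (M * (1/(N:ℝ)))^2 :=
              Finset.sum_le_sum (fun k _ => this k)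
          _ = (N:ℝ) * (M * (1/(N:ℝ)))^2 := by
              rw [Finset.sum_const, Finset.card_univ, Fintype.card_fin, nsmul_eq_mul]
          _ = M^2 * (1/(N:ℝ)) := by field_simp
      have hεpos : (0:ℝ) < cLow H * (1/(N:ℝ)) ^ (max 1 (2*H)) := by
        have h1 := cLow_pos hH0 hH1
        have h2 : (0:ℝ) < (1/(N:ℝ)) ^ (max 1 (2*H)) := Real.rpow_pos_of_pos hδ0 _
        positivity
      have hb : mleStat H X N
          ≤ (1/(N:ℝ)) * ((cLow H * (1/(N:ℝ)) ^ (max 1 (2*H)))⁻¹ * (M^2 * (1/(N:ℝ)))) := by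
        rw [mleStat]
        refine mul_le_mul_of_nonneg_left ?_ hδ0.le
        exact le_trans hq.2 (mul_le_mul_of_nonneg_left hSx (inv_pos.mpr hεpos).le)
      refine le_trans hb (le_of_eq ?_)
      have hpow : (1/(N:ℝ)) ^ ((2:ℝ) - max 1 (2*H))
          = (1/(N:ℝ)) * (1/(N:ℝ)) * ((1/(N:ℝ)) ^ (max 1 (2*H)))⁻¹ := by
        rw [Real.rpow_sub hδ0, show ((2:ℝ)) = ((2:ℕ):ℝ) by norm_num, Real.rpow_natCast,
          div_eq_mul_inv]
        ring
      rw [hpow, mul_inv]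
      have h2 : (0:ℝ) < (1/(N:ℝ)) ^ (max 1 (2*H)) := Real.rpow_pos_of_pos hδ0 _
      ring
  refine ⟨key, ?_⟩
  have he : (0:ℝ) < 2 - max 1 (2*H) := by linarith
  have hg : Tendsto (fun N : ℕ => (cLow H)⁻¹ * M ^ 2 * (1/(N:ℝ)) ^ (2 - max 1 (2*H)))
      atTop (nhds 0) := by
    have h1 : Tendsto (fun N : ℕ => ((N:ℝ) ^ (2 - max 1 (2*H)))) atTop atTop :=
      (tendsto_rpow_atTop he).comp tendsto_natCast_atTop_atTop
    have h2 : Tendsto (fun N : ℕ => ((N:ℝ) ^ (2 - max 1 (2*H)))⁻¹) atTop (nhds 0) :=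
      h1.inv_tendsto_atTop
    have h3 : (fun N : ℕ => (1/(N:ℝ)) ^ (2 - max 1 (2*H)))
        = fun N : ℕ => ((N:ℝ) ^ (2 - max 1 (2*H)))⁻¹ := by
      funext N
      rw [one_div, Real.inv_rpow (Nat.cast_nonneg N)]
    have h4 := h2.const_mul ((cLow H)⁻¹ * M ^ 2)
    rw [mul_zero] at h4
    refine h4.congr (fun N => ?_)
    rw [one_div, Real.inv_rpow (Nat.cast_nonneg N)]
  refine tendsto_of_tendsto_of_tendsto_of_le_of_le' tendsto_const_nhds hg ?_ ?_
  · filter_upwards [eventually_ge_atTop 1] with N hN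
    exact (key N hN).1
  · filter_upwards [eventually_ge_atTop 1] with N hN
    exact (key N hN).2
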